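/- Let M ≥ 2 be an integer, θ, d > 0 reals, and consider the birth-death chain on {0,...,M} with rates r(i,i+1) = θ(M-i)(i+d) and r(i,i-1) = θ i(M-i+2d) for 1 ≤ i ≤ M-1, absorbed at 0 and M. Starting from 1, the probability of absorption at M is at least 1/(M·exp(2d(1+log M))) and at most exp(d(1+log M))/M, and the expected absorption time is at most exp(d(1+log M))·2(1+log M)/(θM). -/

import Mathlib

/-! For `1 ≤ m ≤ M - 1` the ratio `b_m / a_m` lies between `m / (m + d) ≥ exp (-d/m)` and
`1 + 2d / (M - m) ≤ exp (2d / (M - m))`, so every product along the chain is controlled by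
the exponential of `d` or `2d` times a harmonic sum `H_{M-1} ≤ 1 + log M`. For the
absorption time, `b_n ≥ θ n (M - n)` and `1 / (n (M - n)) = (1/n + 1/(M - n)) / M` reduce
the sum to two harmonic sums. -/

open Finset Real

lemma sum_Icc_inv_le_one_add_log {k M : ℕ} (hk : k ≤ M) :
    ∑ m ∈ Icc 1 k, (m : ℝ)⁻¹ ≤ 1 + log M := by
  rcases k.eq_zero_or_pos with rfl | hk0
  · simpa using (by positivity : (0 : ℝ) ≤ 1 + log M)
  have harmonic_le : ∑ m ∈ Icc 1 k, (m : ℝ)⁻¹ ≤ 1 + log k := by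
    simpa [harmonic_eq_sum_Icc] using harmonic_le_one_add_log k
  have log_le : log k ≤ log M := log_le_log (by exact_mod_cast hk0) (by exact_mod_cast hk)
  linarith

lemma sum_Icc_inv_sub_le_one_add_log {k M : ℕ} (hk : k < M) :
    ∑ m ∈ Icc 1 k, ((M : ℝ) - m)⁻¹ ≤ 1 + log M := by
  calc ∑ m ∈ Icc 1 k, ((M : ℝ) - m)⁻¹
        = ∑ m ∈ Ico 1 (k + 1), ((M - m : ℕ) : ℝ)⁻¹ := by
        refine sum_congr (Ico_add_one_right_eq_Icc ..).symm fun m hm => ?_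
        rw [Nat.cast_sub (by simp only [mem_Ico] at hm; omega)]
    _ = ∑ j ∈ Ico (M - k) M, (j : ℝ)⁻¹ := by
        rw [sum_Ico_reflect (fun j : ℕ => (j : ℝ)⁻¹) 1 (by omega : k + 1 ≤ M + 1)]
        simp
    _ ≤ ∑ j ∈ Icc 1 M, (j : ℝ)⁻¹ :=
        sum_le_sum_of_subset_of_nonneg
          (fun j hj => by simp only [mem_Ico, mem_Icc] at hj ⊢; omega) fun j _ _ => by positivity
    _ ≤ 1 + log M := sum_Icc_inv_le_one_add_log le_rfl

lemma sum_Icc_inv_mul_sub_le (M : ℕ) :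
    ∑ n ∈ Icc 1 (M - 1), ((n : ℝ) * (M - n))⁻¹ ≤ 2 * (1 + log M) / M := by
  rcases M.eq_zero_or_pos with rfl | hM
  · simp
  have partial_fractions : ∀ n ∈ Icc 1 (M - 1),
      ((n : ℝ) * (M - n))⁻¹ = ((n : ℝ)⁻¹ + ((M : ℝ) - n)⁻¹) / M := by
    intro n hn
    have hn0 : (n : ℝ) ≠ 0 := Nat.cast_ne_zero.2 (by simp only [mem_Icc] at hn; omega)
    have hMn : (M : ℝ) - n ≠ 0 := sub_ne_zero.2 (by norm_cast; simp only [mem_Icc] at hn; omega)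
    field_simp
    ring
  rw [sum_congr rfl partial_fractions, ← sum_div, sum_add_distrib]
  gcongr
  linarith [sum_Icc_inv_le_one_add_log (Nat.sub_le M 1),
    sum_Icc_inv_sub_le_one_add_log (Nat.sub_lt hM one_pos)]

lemma prod_le_exp_sum {ι : Type*} {s : Finset ι} {f g : ι → ℝ} (hf : ∀ i ∈ s, 0 ≤ f i)
    (hfg : ∀ i ∈ s, f i ≤ exp (g i)) : ∏ i ∈ s, f i ≤ exp (∑ i ∈ s, g i) := by
  rw [exp_sum]
  exact prod_le_prod hf hfg

def birthRate (M : ℕ) (θ d : ℝ) (i : ℕ) : ℝ := θ * ((M : ℝ) - i) * (i + d)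

def deathRate (M : ℕ) (θ d : ℝ) (i : ℕ) : ℝ := θ * (i : ℝ) * ((M : ℝ) - i + 2 * d)

section Rates

variable {M : ℕ} {θ d : ℝ} {i k : ℕ}

lemma birthRate_pos (hθ : 0 < θ) (hd : 0 ≤ d) (hi : 0 < i) (hiM : i < M) :
    0 < birthRate M θ d i := by
  have : (0 : ℝ) < i := by exact_mod_cast hi
  have : (i : ℝ) < M := by exact_mod_cast hiM
  unfold birthRate
  exact mul_pos (mul_pos hθ (by linarith)) (by linarith)

lemma deathRate_pos (hθ : 0 < θ) (hd : 0 ≤ d) (hi : 0 < i) (hiM : i < M) :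
    0 < deathRate M θ d i := by
  have : (0 : ℝ) < i := by exact_mod_cast hi
  have : (i : ℝ) < M := by exact_mod_cast hiM
  unfold deathRate
  exact mul_pos (mul_pos hθ (by linarith)) (by linarith)

lemma mul_sub_le_deathRate (hθ : 0 ≤ θ) (hd : 0 ≤ d) :
    θ * i * ((M : ℝ) - i) ≤ deathRate M θ d i := by
  unfold deathRate
  have : 0 ≤ θ * i := by positivity
  nlinarith

lemma deathRate_div_birthRate_le_exp (hθ : 0 < θ) (hd : 0 ≤ d) (hi : 0 < i) (hiM : i < M) :
    deathRate M θ d i / birthRate M θ d i ≤ exp (2 * d / ((M : ℝ) - i)) := by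
  have hb := birthRate_pos hθ hd hi hiM
  have hy : (M : ℝ) - i ≠ 0 := sub_ne_zero.2 (by exact_mod_cast hiM.ne')
  rw [div_le_iff₀ hb]
  calc deathRate M θ d i ≤ θ * ((M : ℝ) - i + 2 * d) * (i + d) := by
        unfold deathRate
        have : 0 ≤ θ * ((M : ℝ) - i + 2 * d) := by
          have : (i : ℝ) < M := by exact_mod_cast hiM
          exact mul_nonneg hθ.le (by linarith)
        nlinarith
    _ = (2 * d / ((M : ℝ) - i) + 1) * birthRate M θ d i := by
        unfold birthRate
        field_simp
        ring
    _ ≤ exp (2 * d / ((M : ℝ) - i)) * birthRate M θ d i := by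
        gcongr
        exact add_one_le_exp _

lemma birthRate_div_deathRate_le_exp (hθ : 0 < θ) (hd : 0 ≤ d) (hi : 0 < i) (hiM : i < M) :
    birthRate M θ d i / deathRate M θ d i ≤ exp (d / i) := by
  have hb := deathRate_pos hθ hd hi hiM
  have hi' : (i : ℝ) ≠ 0 := by exact_mod_cast hi.ne'
  rw [div_le_iff₀ hb]
  calc birthRate M θ d i ≤ θ * (i + d) * ((M : ℝ) - i + 2 * d) := by
        unfold birthRate
        have : 0 ≤ θ * (i + d) := by positivity
        nlinarith
    _ = (d / i + 1) * deathRate M θ d i := by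
        unfold deathRate
        field_simp
        ring
    _ ≤ exp (d / i) * deathRate M θ d i := by
        gcongr
        exact add_one_le_exp _

lemma prod_birthRate_div_deathRate_le (hθ : 0 < θ) (hd : 0 ≤ d) (hk : k < M) :
    ∏ m ∈ Icc 1 k, birthRate M θ d m / deathRate M θ d m ≤ exp (d * (1 + log M)) := by
  have hmem : ∀ m ∈ Icc 1 k, 0 < m ∧ m < M := fun m hm => by simp only [mem_Icc] at hm; omega
  calc _ ≤ exp (∑ m ∈ Icc 1 k, d / m) :=
        prod_le_exp_sum
          (fun m hm => (div_pos (birthRate_pos hθ hd (hmem m hm).1 (hmem m hm).2)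
            (deathRate_pos hθ hd (hmem m hm).1 (hmem m hm).2)).le)
          fun m hm => birthRate_div_deathRate_le_exp hθ hd (hmem m hm).1 (hmem m hm).2
    _ ≤ _ := by
        simp_rw [div_eq_mul_inv, ← mul_sum]
        exact exp_le_exp.2 (mul_le_mul_of_nonneg_left (sum_Icc_inv_le_one_add_log hk.le) hd)

lemma prod_deathRate_div_birthRate_le (hθ : 0 < θ) (hd : 0 ≤ d) (hk : k < M) :
    ∏ m ∈ Icc 1 k, deathRate M θ d m / birthRate M θ d m ≤ exp (2 * d * (1 + log M)) := by
  have hmem : ∀ m ∈ Icc 1 k, 0 < m ∧ m < M := fun m hm => by simp only [mem_Icc] at hm; omega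
  calc _ ≤ exp (∑ m ∈ Icc 1 k, 2 * d / ((M : ℝ) - m)) :=
        prod_le_exp_sum
          (fun m hm => (div_pos (deathRate_pos hθ hd (hmem m hm).1 (hmem m hm).2)
            (birthRate_pos hθ hd (hmem m hm).1 (hmem m hm).2)).le)
          fun m hm => deathRate_div_birthRate_le_exp hθ hd (hmem m hm).1 (hmem m hm).2
    _ ≤ _ := by
        simp_rw [div_eq_mul_inv, ← mul_sum]
        exact exp_le_exp.2
          (mul_le_mul_of_nonneg_left (sum_Icc_inv_sub_le_one_add_log hk) (by linarith))

lemma exp_neg_le_prod_deathRate_div_birthRate (hθ : 0 < θ) (hd : 0 ≤ d) (hk : k < M) :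
    exp (-(d * (1 + log M))) ≤ ∏ m ∈ Icc 1 k, deathRate M θ d m / birthRate M θ d m := by
  have hpos : 0 < ∏ m ∈ Icc 1 k, birthRate M θ d m / deathRate M θ d m :=
    prod_pos fun m hm => by
      simp only [mem_Icc] at hm
      exact div_pos (birthRate_pos hθ hd (by omega) (by omega))
        (deathRate_pos hθ hd (by omega) (by omega))
  calc exp (-(d * (1 + log M))) = (exp (d * (1 + log M)))⁻¹ := exp_neg _
    _ ≤ (∏ m ∈ Icc 1 k, birthRate M θ d m / deathRate M θ d m)⁻¹ :=
        inv_anti₀ hpos (prod_birthRate_div_deathRate_le hθ hd hk)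
    _ = _ := by simp_rw [← prod_inv_distrib, inv_div]

lemma inv_deathRate_mul_prod_le (hθ : 0 < θ) (hd : 0 ≤ d) (hi : 0 < i) (hiM : i < M) :
    1 / deathRate M θ d i * ∏ m ∈ Icc 1 (i - 1), birthRate M θ d m / deathRate M θ d m
      ≤ exp (d * (1 + log M)) / θ * ((i : ℝ) * (M - i))⁻¹ := by
  have hprod_nonneg : 0 ≤ ∏ m ∈ Icc 1 (i - 1), birthRate M θ d m / deathRate M θ d m :=
    prod_nonneg fun m hm => by
      simp only [mem_Icc] at hm
      exact (div_pos (birthRate_pos hθ hd (by omega) (by omega))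
        (deathRate_pos hθ hd (by omega) (by omega))).le
  have hlow : 0 < θ * i * ((M : ℝ) - i) :=
    mul_pos (mul_pos hθ (by exact_mod_cast hi)) (sub_pos.2 (by exact_mod_cast hiM))
  calc _ ≤ 1 / (θ * i * ((M : ℝ) - i)) * exp (d * (1 + log M)) :=
        mul_le_mul (one_div_le_one_div_of_le hlow (mul_sub_le_deathRate hθ.le hd))
          (prod_birthRate_div_deathRate_le hθ hd (by omega)) hprod_nonneg (by positivity)
    _ = _ := by
        field_simp

lemma sum_prod_deathRate_div_birthRate_le (hθ : 0 < θ) (hd : 0 ≤ d) :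
    ∑ j ∈ Icc 1 M, ∏ m ∈ Icc 1 (j - 1), deathRate M θ d m / birthRate M θ d m
      ≤ M * exp (2 * d * (1 + log M)) :=
  calc _ ≤ #(Icc 1 M) • exp (2 * d * (1 + log M)) := sum_le_card_nsmul _ _ _ fun j hj =>
        prod_deathRate_div_birthRate_le hθ hd (by simp only [mem_Icc] at hj; omega)
    _ = _ := by simp

lemma mul_exp_neg_le_sum_prod_deathRate_div_birthRate (hθ : 0 < θ) (hd : 0 ≤ d) :
    M * exp (-(d * (1 + log M)))
      ≤ ∑ j ∈ Icc 1 M, ∏ m ∈ Icc 1 (j - 1), deathRate M θ d m / birthRate M θ d m :=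
  calc (M : ℝ) * exp (-(d * (1 + log M))) = #(Icc 1 M) • exp (-(d * (1 + log M))) := by simp
    _ ≤ _ := card_nsmul_le_sum _ _ _ fun j hj =>
        exp_neg_le_prod_deathRate_div_birthRate hθ hd (by simp only [mem_Icc] at hj; omega)

lemma sum_inv_deathRate_mul_prod_le (hθ : 0 < θ) (hd : 0 ≤ d) :
    ∑ n ∈ Icc 1 (M - 1),
        1 / deathRate M θ d n * ∏ m ∈ Icc 1 (n - 1), birthRate M θ d m / deathRate M θ d m
      ≤ exp (d * (1 + log M)) * (2 * (1 + log M)) / (θ * M) :=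
  calc _ ≤ ∑ n ∈ Icc 1 (M - 1), exp (d * (1 + log M)) / θ * ((n : ℝ) * (M - n))⁻¹ :=
        sum_le_sum fun n hn => by
          simp only [mem_Icc] at hn
          exact inv_deathRate_mul_prod_le hθ hd (by omega) (by omega)
    _ = exp (d * (1 + log M)) / θ * ∑ n ∈ Icc 1 (M - 1), ((n : ℝ) * (M - n))⁻¹ :=
        (mul_sum ..).symm
    _ ≤ exp (d * (1 + log M)) / θ * (2 * (1 + log M) / M) := by
        gcongr
        exact sum_Icc_inv_mul_sub_le M
    _ = _ := div_mul_div_comm ..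

end Rates

/-- For the birth-death chain on `{0,…,M}` with birth rates `a' i = θ(M-i)(i+d)` and
death rates `b' i = θ·i·(M-i+2d)`, absorbed at `0` and `M`: starting from `1`, the
absorption probability at `M`, which equals `1/∑_{j=1}^{M} ∏_{m=1}^{j-1} b'_m/a'_m`,
lies between `1/(M·exp(2d(1+log M)))` and `exp(d(1+log M))/M`, and the expected
absorption time, which is at most `∑_{n=1}^{M-1} (1/b'_n) ∏_{m=1}^{n-1} a'_m/b'_m`,
is at most `exp(d(1+log M))·2(1+log M)/(θM)`. -/
theorem stmt6 (M : ℕ) (hM : 2 ≤ M) (θ d : ℝ) (hθ : 0 < θ) (hd : 0 < d)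
    (a b : ℕ → ℝ)
    (ha : ∀ i, a i = θ * ((M : ℝ) - i) * (i + d))
    (hb : ∀ i, b i = θ * (i : ℝ) * ((M : ℝ) - i + 2 * d))
    (P E : ℝ)
    (hP : P = 1 / (∑ j ∈ Finset.Icc 1 M, ∏ m ∈ Finset.Icc 1 (j - 1), b m / a m))
    (hE : E ≤ ∑ n ∈ Finset.Icc 1 (M - 1), (1 / b n) * ∏ m ∈ Finset.Icc 1 (n - 1), a m / b m) :
    1 / ((M : ℝ) * Real.exp (2 * d * (1 + Real.log M))) ≤ P ∧
    P ≤ Real.exp (d * (1 + Real.log M)) / M ∧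
    E ≤ Real.exp (d * (1 + Real.log M)) * (2 * (1 + Real.log M)) / (θ * M) := by
  obtain rfl : a = birthRate M θ d := funext ha
  obtain rfl : b = deathRate M θ d := funext hb
  have hM0 : (0 : ℝ) < M := by exact_mod_cast (by omega : 0 < M)
  have hS_le := sum_prod_deathRate_div_birthRate_le (M := M) hθ hd.le
  have hS_ge := mul_exp_neg_le_sum_prod_deathRate_div_birthRate (M := M) hθ hd.le
  have hS_pos := (mul_pos hM0 (exp_pos _)).trans_le hS_ge
  subst hP
  refine ⟨one_div_le_one_div_of_le hS_pos hS_le, ?_,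
    hE.trans (sum_inv_deathRate_mul_prod_le hθ hd.le)⟩
  calc _ ≤ 1 / (M * exp (-(d * (1 + log M)))) :=
        one_div_le_one_div_of_le (mul_pos hM0 (exp_pos _)) hS_ge
    _ = _ := by rw [exp_neg]; field_simp
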